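/- arXiv:2004.14732 — 5 statements merged into one kernel-verified Lean document; each statement's English description precedes it below -/
import Mathlib

section
/- Let R be an integral domain such that for any n+1 elements x₁, …, x_{n+1} of R, some xᵢ lies in the ideal generated by the others. Then R has at most n maximal ideals. -/
open Finset in
/-- If `R` is an integral domain such that among any `n+1` elements, some element
lies in the ideal generated by the others, then `R` has at most `n` maximal ideals. -/
theorem stmt_3 (R : Type*) [CommRing R] [IsDomain R] (n : ℕ)
    (hW : ∀ x : Fin (n + 1) → R, ∃ i, x i ∈ Ideal.span (x '' {i}ᶜ)) :
    ∀ s : Finset (Ideal R), (∀ I ∈ s, I.IsMaximal) → s.card ≤ n := by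
  intro s hs
  by_contra h
  push_neg at h
  obtain ⟨t, hts, htc⟩ := Finset.exists_subset_card_eq h
  let eqv := Finset.equivFinOfCardEq htc
  set m : Fin (n + 1) → Ideal R := fun i => ((eqv.symm i : t) : Ideal R) with hm
  have hmax : ∀ i, (m i).IsMaximal := fun i => hs _ (hts (eqv.symm i).2)
  have hinj : Function.Injective m := fun i j hij => by
    have : (eqv.symm i : t) = (eqv.symm j : t) := Subtype.ext hij
    simpa using eqv.symm.injective this
  -- for i ≠ j pick a ∈ m j \ m i
  have key : ∀ i j : Fin (n + 1), ∃ a, i ≠ j → a ∈ m j ∧ a ∉ m i := by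
    intro i j
    by_cases hij : i ≠ j
    · by_contra hc
      push_neg at hc
      have hle : m j ≤ m i := fun b hb => (hc b).2 hb
      have := ((hmax j).eq_of_le (hmax i).ne_top hle)
      exact hij (hinj this).symm
    · exact ⟨0, fun h => absurd h hij⟩
  choose a ha using key
  set x : Fin (n + 1) → R := fun i => ∏ j ∈ Finset.univ.erase i, a i j with hx
  have hxmem : ∀ i j, i ≠ j → x i ∈ m j := by
    intro i j hij
    show ∏ k ∈ Finset.univ.erase i, a i k ∈ m j
    rw [← Finset.prod_erase_mul _ _ (Finset.mem_erase.mpr ⟨hij.symm, Finset.mem_univ j⟩)]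
    exact Ideal.mul_mem_left _ _ (ha i j hij).1
  have hxnot : ∀ i, x i ∉ m i := by
    intro i hxi
    have hxi' : ∏ k ∈ Finset.univ.erase i, a i k ∈ m i := hxi
    have := (Ideal.IsPrime.prod_mem_iff (hp := (hmax i).isPrime)).mp hxi'
    obtain ⟨j, hj, hja⟩ := this
    exact (ha i j (fun hji => (Finset.mem_erase.mp hj).1 hji.symm)).2 hja
  obtain ⟨i, hi⟩ := hW x
  have hle : Ideal.span (x '' {i}ᶜ) ≤ m i := by
    rw [Ideal.span_le]
    rintro _ ⟨j, hj, rfl⟩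
    exact hxmem j i (fun hji => hj (hji ▸ rfl))
  exact hxnot i (hle hi)
end

section
/- Let R be a subring of a field K with Frac(R) = K, and suppose every antichain (under inclusion) in the poset of valuation subrings of K containing R has size at most n. Then the integral closure of R in K is an intersection of at most n valuation subrings of K. -/
/-!
The integral closure of `R` in `K` is the intersection of all valuation subrings containing `R`.
A chain of valuation subrings has a valuation subring as intersection, so by Zorn every
valuation subring containing `R` contains a minimal one, and the intersection may be taken over
the minimal ones only. These form an antichain, hence there are at most `n` of them.
-/

theorem Set.finite_of_forall_finset_card_le {α : Type*} {s : Set α} {n : ℕ}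
    (h : ∀ t : Finset α, ↑t ⊆ s → t.card ≤ n) : s.Finite := by
  by_contra hs
  obtain ⟨t, hts, htcard⟩ := Set.Infinite.exists_subset_card_eq hs (n + 1)
  have := h t hts
  omega

namespace ValuationSubring

variable {K : Type*} [Field K]

def chainInf (c : Set (ValuationSubring K)) (hc : IsChain (· ≤ ·) c) : ValuationSubring K where
  toSubring := ⨅ O : c, O.1.toSubring
  mem_or_inv_mem' x := by
    change x ∈ ⨅ O : c, O.1.toSubring ∨ x⁻¹ ∈ ⨅ O : c, O.1.toSubring
    simp only [Subring.mem_iInf, Subtype.forall]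
    by_contra! ⟨⟨O₁, hO₁, hx⟩, ⟨O₂, hO₂, hxinv⟩⟩
    rcases hc.total hO₁ hO₂ with h | h
    · exact hxinv (h ((O₁.mem_or_inv_mem x).resolve_left hx))
    · exact hx (h ((O₂.mem_or_inv_mem x).resolve_right hxinv))

variable {c : Set (ValuationSubring K)} {hc : IsChain (· ≤ ·) c}

theorem mem_chainInf {x : K} : x ∈ chainInf c hc ↔ ∀ O ∈ c, x ∈ O := by
  simp [chainInf, ← mem_toSubring, Subring.mem_iInf]

theorem chainInf_le {O : ValuationSubring K} (hO : O ∈ c) : chainInf c hc ≤ O :=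
  fun _ hx => mem_chainInf.mp hx O hO

theorem exists_minimal_le {R : Subring K} {O : ValuationSubring K} (hO : R ≤ O.toSubring) :
    ∃ O' ≤ O, Minimal (fun V : ValuationSubring K => R ≤ V.toSubring) O' := by
  obtain ⟨O', hO'O, hO'⟩ := zorn_le_nonempty₀ (α := (ValuationSubring K)ᵒᵈ)
    {V | R ≤ V.toSubring} (fun c hcR hc _ _ =>
      ⟨chainInf c hc.symm, fun _ hx => mem_chainInf.mpr fun V hV => hcR hV hx,
        fun _ hV => chainInf_le hV⟩) O hO
  exact ⟨O', hO'O, hO'.of_dual⟩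

theorem coe_integralClosure_eq_biInter (R : Subring K) :
    (integralClosure R K : Set K) =
      ⋂ (O : ValuationSubring K) (_ : R ≤ O.toSubring), (O : Set K) := by
  have h := iInf_valuationSubring_superset (s := (R : Set K))
  rw [Subring.closure_eq] at h
  ext x
  simpa [Subring.mem_iInf] using (SetLike.ext_iff.mp h x).symm

theorem coe_integralClosure_eq_biInter_minimal (R : Subring K) :
    (integralClosure R K : Set K) =
      ⋂ O ∈ {O | Minimal (fun V : ValuationSubring K => R ≤ V.toSubring) O}, (O : Set K) := by
  rw [coe_integralClosure_eq_biInter]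
  ext x
  simp only [Set.mem_iInter, Set.mem_ofPred_eq, SetLike.mem_coe]
  refine ⟨fun h O hO => h O hO.prop, fun h O hO => ?_⟩
  obtain ⟨O', hO'O, hO'⟩ := exists_minimal_le hO
  exact hO'O (h O' hO')

end ValuationSubring

theorem stmt_6_general (K : Type*) [Field K] (R : Subring K) (n : ℕ)
    (hanti : ∀ A : Finset (ValuationSubring K),
      (∀ O ∈ A, (R : Set K) ⊆ (O : Set K)) →
      (∀ O ∈ A, ∀ O' ∈ A, O ≠ O' → ¬ ((O : Set K) ⊆ (O' : Set K))) →
      A.card ≤ n) :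
    ∃ s : Finset (ValuationSubring K), s.card ≤ n ∧
      (integralClosure R K : Set K) = ⋂ O ∈ s, (O : Set K) := by
  set M := {O | Minimal (fun V : ValuationSubring K => R ≤ V.toSubring) O}
  have hcard (t : Finset (ValuationSubring K)) (ht : ↑t ⊆ M) : t.card ≤ n :=
    hanti t (fun O hO => (ht hO).1) fun O hO O' hO' =>
      setOfPred_minimal_antichain _ (ht hO) (ht hO')
  have hM : M.Finite := Set.finite_of_forall_finset_card_le hcard
  refine ⟨hM.toFinset, hcard _ hM.coe_toFinset.subset, ?_⟩
  simp only [Set.Finite.mem_toFinset]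
  exact ValuationSubring.coe_integralClosure_eq_biInter_minimal R

/-- Let `R` be a subring of a field `K` with `Frac(R) = K`.  If every antichain in
the poset of valuation subrings of `K` containing `R` has size at most `n`, then
the integral closure of `R` in `K` is an intersection of at most `n` valuation
subrings of `K`. -/
theorem stmt_6 (K : Type*) [Field K] (R : Subring K) (n : ℕ)
    (hfrac : ∀ x : K, ∃ a b : R, (b : K) ≠ 0 ∧ x = (a : K) / (b : K))
    (hanti : ∀ A : Finset (ValuationSubring K),
      (∀ O ∈ A, (R : Set K) ⊆ (O : Set K)) →
      (∀ O ∈ A, ∀ O' ∈ A, O ≠ O' → ¬ ((O : Set K) ⊆ (O' : Set K))) →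
      A.card ≤ n) :
    ∃ s : Finset (ValuationSubring K), s.card ≤ n ∧
      (integralClosure R K : Set K) = ⋂ O ∈ s, (O : Set K) :=
  stmt_6_general K R n hanti
end

section
/- For an R-module M and n ∈ ℕ, the following are equivalent: (a) there exist m₁, …, mₙ ∈ M such that for each i, mᵢ ∉ Σ_{j≠i} R·mⱼ; (b) there exist submodules N' ≤ N ≤ M such that N/N' is isomorphic to a direct sum of n nonzero R-modules. -/
/-- For an `R`-module `M` and `n : ℕ`, the following are equivalent:
(a) there exist `m₁, …, mₙ ∈ M` with `mᵢ ∉ Σ_{j≠i} R·mⱼ` for each `i`;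
(b) there exist submodules `N' ≤ N ≤ M` such that `N/N'` is a direct sum of
`n` nonzero `R`-modules (here expressed as an internal direct sum of `n`
nonzero independent submodules with join everything). -/
theorem stmt_11 (R : Type*) [CommRing R] (M : Type*) [AddCommGroup M] [Module R M]
    (n : ℕ) :
    (∃ m : Fin n → M, ∀ i, m i ∉ Submodule.span R (m '' {i}ᶜ)) ↔
      (∃ (N' N : Submodule R M) (_ : N' ≤ N)
          (Q : Fin n → Submodule R (N ⧸ Submodule.comap N.subtype N')),
        (∀ i, Q i ≠ ⊥) ∧ iSupIndep Q ∧ (⨆ i, Q i) = ⊤) := by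
  constructor
  · rintro ⟨m, hm⟩
    set S : Fin n → Submodule R M := fun i => Submodule.span R (m '' {i}ᶜ) with hSdef
    set s : Set (Submodule R M) := {K | ∀ i, m i ∉ K ⊔ S i} with hsdef
    have hbot : (⊥ : Submodule R M) ∈ s := by
      intro i
      rw [bot_sup_eq]
      exact hm i
    obtain ⟨N', -, hN's, hN'max⟩ := zorn_le_nonempty₀ s (fun c hcs hc y hy => by
      refine ⟨sSup c, ?_, fun z hz => le_sSup hz⟩
      intro i hi
      obtain ⟨a, ha, b, hb, hab⟩ := Submodule.mem_sup.mp hi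
      obtain ⟨K, hKc, haK⟩ := (Submodule.mem_sSup_of_directed ⟨y, hy⟩ hc.directedOn).mp ha
      exact hcs hKc i (hab ▸ Submodule.add_mem_sup haK hb)) ⊥ hbot
    -- key maximality consequence
    have key : ∀ (i : Fin n) (r : R), r • m i ∈ N' ⊔ S i → r • m i ∈ N' := by
      intro i r hr
      by_contra hrn
      have hlt : ¬ (N' ⊔ Submodule.span R {r • m i} ∈ s) := by
        intro hmem
        have := hN'max hmem le_sup_left
        exact hrn (this (Submodule.mem_sup_right (Submodule.mem_span_singleton_self _)))
      apply hlt
      intro k hk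
      rcases eq_or_ne k i with rfl | hki
      · have hsp : Submodule.span R {r • m k} ≤ N' ⊔ S k :=
          (Submodule.span_singleton_le_iff_mem _ _).mpr hr
        have : N' ⊔ Submodule.span R {r • m k} ⊔ S k ≤ N' ⊔ S k := by
          rw [sup_assoc]
          exact sup_le le_sup_left (sup_le hsp le_sup_right)
        exact hN's k (this hk)
      · have hmi : m i ∈ S k := Submodule.subset_span ⟨i, fun h => hki h.symm, rfl⟩
        have hsp : Submodule.span R {r • m i} ≤ S k :=
          (Submodule.span_singleton_le_iff_mem _ _).mpr (Submodule.smul_mem _ r hmi)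
        have : N' ⊔ Submodule.span R {r • m i} ⊔ S k ≤ N' ⊔ S k := by
          rw [sup_assoc]
          exact sup_le le_sup_left (sup_le (hsp.trans le_sup_right) le_sup_right)
        exact hN's k (this hk)
    set N : Submodule R M := N' ⊔ Submodule.span R (Set.range m) with hNdef
    have hle : N' ≤ N := le_sup_left
    have hmN : ∀ i, m i ∈ N := fun i =>
      Submodule.mem_sup_right (Submodule.subset_span ⟨i, rfl⟩)
    set x : Fin n → N := fun i => ⟨m i, hmN i⟩ with hxdef
    set K : Submodule R N := Submodule.comap N.subtype N' with hKdef
    set Q : Fin n → Submodule R (N ⧸ K) :=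
      fun i => Submodule.span R {Submodule.Quotient.mk (x i)} with hQdef
    have hxval : ∀ (w : N) (s' : Set (Fin n)), w ∈ Submodule.span R (x '' s') →
        (w : M) ∈ Submodule.span R (m '' s') := by
      intro w s' hw
      have : (w : M) ∈ Submodule.map N.subtype (Submodule.span R (x '' s')) :=
        ⟨w, hw, rfl⟩
      rwa [Submodule.map_span, Set.image_image] at this
    refine ⟨N', N, hle, Q, ?_, ?_, ?_⟩
    · intro i hQi
      rw [hQdef] at hQi
      have := Submodule.span_singleton_eq_bot.mp hQi
      rw [Submodule.Quotient.mk_eq_zero] at this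
      exact hN's i (Submodule.mem_sup_left this)
    · rw [iSupIndep_def]
      intro i
      rw [Submodule.disjoint_def]
      intro z hzi hzrest
      obtain ⟨r, rfl⟩ := Submodule.mem_span_singleton.mp hzi
      have hle2 : (⨆ (j) (_ : j ≠ i), Q j) ≤
          Submodule.map K.mkQ (Submodule.span R (x '' {i}ᶜ)) := by
        refine iSup_le fun j => iSup_le fun hj => ?_
        rw [hQdef]
        rw [Submodule.span_singleton_le_iff_mem]
        exact ⟨x j, Submodule.subset_span ⟨j, hj, rfl⟩, rfl⟩
      obtain ⟨w, hw, hweq⟩ := hle2 hzrest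
      have hdiff : r • x i - w ∈ K := by
        rw [← Submodule.Quotient.mk_eq_zero, Submodule.Quotient.mk_sub,
          Submodule.Quotient.mk_smul]
        change r • Submodule.Quotient.mk (x i) - K.mkQ w = 0
        rw [hweq, sub_self]
      have hwS : (w : M) ∈ S i := hxval w _ hw
      have hmem : r • m i ∈ N' ⊔ S i := by
        have : (r • m i) - (w : M) ∈ N' := hdiff
        have h2 := Submodule.add_mem_sup this (Submodule.mem_sup_right hwS : (w : M) ∈ N' ⊔ S i)
        simpa using h2
      have hN'mem : r • m i ∈ N' := key i r hmem
      rw [← Submodule.Quotient.mk_smul, Submodule.Quotient.mk_eq_zero]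
      exact hN'mem
    · rw [eq_top_iff]
      rintro z -
      obtain ⟨y, rfl⟩ := Submodule.Quotient.mk_surjective K z
      have hyW : (y : M) ∈ Submodule.map N.subtype (Submodule.comap K.mkQ (⨆ i, Q i)) := by
        have hNle : N ≤ Submodule.map N.subtype (Submodule.comap K.mkQ (⨆ i, Q i)) := by
          refine le_trans hNdef.le (sup_le ?_ ?_)
          · intro a ha
            refine ⟨⟨a, hle ha⟩, ?_, rfl⟩
            have h0 : (Submodule.Quotient.mk ⟨a, hle ha⟩ : N ⧸ K) = 0 :=
              (Submodule.Quotient.mk_eq_zero K).mpr (Submodule.mem_comap.mpr ha)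
            refine Submodule.mem_comap.mpr ?_
            rw [Submodule.mkQ_apply, h0]
            exact Submodule.zero_mem _
          · rw [Submodule.span_le]
            rintro _ ⟨i, rfl⟩
            refine ⟨x i, Submodule.mem_comap.mpr ?_, rfl⟩
            rw [Submodule.mkQ_apply]
            exact le_iSup Q i (Submodule.subset_span rfl)
        exact hNle y.2
      obtain ⟨u, hu, huy⟩ := hyW
      have : u = y := Subtype.ext huy
      rw [← this]
      exact hu
  · rintro ⟨N', N, hle, Q, hne, hind, hsup⟩
    have hpick : ∀ i, ∃ y : N, Submodule.Quotient.mk y ∈ Q i ∧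
        (Submodule.Quotient.mk y : N ⧸ Submodule.comap N.subtype N') ≠ 0 := by
      intro i
      obtain ⟨q, hq, hq0⟩ := (Submodule.ne_bot_iff (Q i)).mp (hne i)
      obtain ⟨y, rfl⟩ := Submodule.Quotient.mk_surjective _ q
      exact ⟨y, hq, hq0⟩
    choose y hyQ hy0 using hpick
    refine ⟨fun i => (y i : M), fun i hmem => ?_⟩
    -- transfer to span inside N
    have hspan : Submodule.span R ((fun i => (y i : M)) '' {i}ᶜ) =
        Submodule.map N.subtype (Submodule.span R (y '' {i}ᶜ)) := by
      rw [Submodule.map_span, Set.image_image]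
      simp only [Submodule.subtype_apply]
    rw [hspan] at hmem
    obtain ⟨w, hw, hweq⟩ := hmem
    have hwy : w = y i := Subtype.ext hweq
    rw [hwy] at hw
    -- push to quotient
    have hmk : (Submodule.Quotient.mk (y i) : N ⧸ Submodule.comap N.subtype N') ∈
        Submodule.map (Submodule.comap N.subtype N').mkQ (Submodule.span R (y '' {i}ᶜ)) :=
      ⟨y i, hw, rfl⟩
    have hle2 : Submodule.map (Submodule.comap N.subtype N').mkQ (Submodule.span R (y '' {i}ᶜ)) ≤
        ⨆ (j) (_ : j ≠ i), Q j := by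
      rw [Submodule.map_span, Submodule.span_le, Set.image_image]
      rintro _ ⟨j, hj, rfl⟩
      have : (Submodule.Quotient.mk (y j) : N ⧸ Submodule.comap N.subtype N') ∈ Q j := hyQ j
      exact le_iSup₂ (f := fun j _ => Q j) j hj this
    have hdisj := (iSupIndep_def.mp hind) i
    have := hdisj.le_bot ⟨hyQ i, hle2 hmk⟩
    exact hy0 i this
end

section
/- Cube rank is subadditive in short exact sequences: if 0 → N → M → N' → 0 is a short exact sequence of R-modules, then c-rk(M) ≤ c-rk(N) + c-rk(N'), where c-rk(X) is the supremum of k such that there exist x₁, …, x_k ∈ X with xᵢ ∉ Σ_{j≠i} R·xⱼ for all i. -/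
/-- The cube rank of an `R`-module `X`: the supremum (in `ℕ∞`) of the set of `k`
such that there exist `x₁, …, x_k ∈ X` with `xᵢ ∉ Σ_{j≠i} R·xⱼ` for all `i`. -/
noncomputable def cubeRank (R X : Type*) [CommRing R] [AddCommGroup X]
    [Module R X] : ℕ∞ :=
  sSup ((fun k : ℕ => (k : ℕ∞)) ''
    {k : ℕ | ∃ x : Fin k → X, ∀ i, x i ∉ Submodule.span R (x '' {i}ᶜ)})

lemma finset_witness_le {R X : Type*} [CommRing R] [AddCommGroup X] [Module R X]
    {ι : Type*} (u : Finset ι) (y : ι → X)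
    (hy : ∀ i ∈ u, y i ∉ Submodule.span R (y '' (↑u \ {i}))) :
    (u.card : ℕ∞) ≤ cubeRank R X := by
  classical
  set e := u.equivFin.symm with he
  refine le_sSup ⟨u.card, ⟨fun j => y (e j), fun j hj => ?_⟩, rfl⟩
  refine hy (e j) (e j).2 (Submodule.span_mono ?_ hj)
  rintro _ ⟨j', hj', rfl⟩
  refine ⟨e j', ⟨(e j').2, ?_⟩, rfl⟩
  simp only [Set.mem_singleton_iff]
  intro h
  exact hj' (e.injective (Subtype.ext h))

/-- Cube rank is subadditive in short exact sequences: if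
`0 → N → M → N' → 0` is exact, then `c-rk(M) ≤ c-rk(N) + c-rk(N')`. -/
theorem stmt_12 (R N M N' : Type*) [CommRing R]
    [AddCommGroup N] [Module R N] [AddCommGroup M] [Module R M]
    [AddCommGroup N'] [Module R N']
    (f : N →ₗ[R] M) (g : M →ₗ[R] N')
    (hf : Function.Injective f) (hg : Function.Surjective g)
    (hfg : LinearMap.range f = LinearMap.ker g) :
    cubeRank R M ≤ cubeRank R N + cubeRank R N' := by
  classical
  refine sSup_le ?_
  rintro _ ⟨k, ⟨x, hx⟩, rfl⟩
  -- the predicate: finsets whose image under g ∘ x spans everything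
  set P : Finset (Fin k) → Prop :=
    fun s => ∀ i, g (x i) ∈ Submodule.span R ((g ∘ x) '' ↑s) with hP
  have hPuniv : P Finset.univ := by
    intro i
    apply Submodule.subset_span
    exact ⟨i, by simp, rfl⟩
  -- pick a minimal-cardinality such finset
  obtain ⟨s, hsmem, hsmin⟩ :=
    Finset.exists_min_image (Finset.univ.filter P) Finset.card
      ⟨Finset.univ, by simpa using hPuniv⟩
  have hsP : P s := (Finset.mem_filter.mp hsmem).2
  -- Step A: g ∘ x is a witness on s in N'
  have hA : ∀ i ∈ s, g (x i) ∉ Submodule.span R ((g ∘ x) '' (↑s \ {i})) := by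
    intro i hi hmem
    have herase : P (s.erase i) := by
      intro l
      have h1 : Submodule.span R ((g ∘ x) '' ↑s)
          ≤ Submodule.span R ((g ∘ x) '' ↑(s.erase i)) := by
        rw [Submodule.span_le]
        rintro _ ⟨j, hj, rfl⟩
        by_cases hji : j = i
        · subst hji
          rw [Finset.coe_erase]
          exact hmem
        · exact Submodule.subset_span ⟨j, by simp [Finset.mem_erase, hji, hj], rfl⟩
      exact h1 (hsP l)
    have := hsmin (s.erase i) (by simpa using herase)
    have hlt : (s.erase i).card < s.card := Finset.card_erase_lt_of_mem hi
    omega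
  -- Step B: choose preimages for the complement
  have hchoice : ∀ i : Fin k, ∃ m, m ∈ Submodule.span R (x '' ↑s) ∧ ∃ n, f n = x i - m := by
    intro i
    have h1 : g (x i) ∈ Submodule.map g (Submodule.span R (x '' ↑s)) := by
      rw [Submodule.map_span, ← Set.image_comp]
      exact hsP i
    obtain ⟨m, hm, hgm⟩ := h1
    have : x i - m ∈ LinearMap.range f := by
      rw [hfg, LinearMap.mem_ker, map_sub, hgm, sub_self]
    obtain ⟨n, hn⟩ := this
    exact ⟨m, hm, n, hn⟩
  choose m hmem n hn using hchoice
  have hB : ∀ i ∈ sᶜ, n i ∉ Submodule.span R (n '' (↑sᶜ \ {i})) := by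
    intro i hi hmemn
    have his : i ∉ s := Finset.mem_compl.mp hi
    have hsub : Submodule.span R (x '' ↑s) ≤ Submodule.span R (x '' {i}ᶜ) :=
      Submodule.span_mono (Set.image_mono (by
        intro j hj
        simp only [Set.mem_compl_iff, Set.mem_singleton_iff]
        rintro rfl
        exact his hj))
    have h1 : f (n i) ∈ Submodule.map f (Submodule.span R (n '' (↑sᶜ \ {i}))) :=
      Submodule.mem_map_of_mem hmemn
    rw [Submodule.map_span, ← Set.image_comp] at h1
    have h2 : Submodule.span R ((f ∘ n) '' (↑sᶜ \ {i})) ≤ Submodule.span R (x '' {i}ᶜ) := by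
      rw [Submodule.span_le]
      rintro _ ⟨j, ⟨hjc, hji⟩, rfl⟩
      have hxj : x j ∈ Submodule.span R (x '' {i}ᶜ) :=
        Submodule.subset_span ⟨j, hji, rfl⟩
      have : (f ∘ n) j = x j - m j := hn j
      rw [this]
      exact sub_mem hxj (hsub (hmem j))
    have h3 : x i - m i ∈ Submodule.span R (x '' {i}ᶜ) := hn i ▸ h2 h1
    have h4 : x i ∈ Submodule.span R (x '' {i}ᶜ) := by
      have := add_mem h3 (hsub (hmem i))
      simpa using this
    exact hx i h4
  have hle1 : ((sᶜ : Finset (Fin k)).card : ℕ∞) ≤ cubeRank R N :=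
    finset_witness_le sᶜ n hB
  have hle2 : ((s : Finset (Fin k)).card : ℕ∞) ≤ cubeRank R N' := by
    have := finset_witness_le s (g ∘ x) hA
    exact this
  have hcard : sᶜ.card + s.card = k := by
    have := Finset.card_add_card_compl s
    simp only [Fintype.card_fin] at this
    omega
  calc ((k : ℕ) : ℕ∞) = ((sᶜ.card : ℕ) : ℕ∞) + ((s.card : ℕ) : ℕ∞) := by
        rw [← Nat.cast_add, hcard]
    _ ≤ cubeRank R N + cubeRank R N' := add_le_add hle1 hle2
end

section
/- Let R be a ring and M an R-module with c-rk(M) ≥ n, where c-rk is cube rank. Then M has a subquotient which is a semisimple R-module of length n. -/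
/-!
Each nonzero summand `P i` contains a cyclic submodule `R ∙ v ≅ R ⧸ ann v`, which maps onto the
simple module `R ⧸ m` for a maximal ideal `m ⊇ ann v`. Subquotients of subquotients are
subquotients, and a product of subquotients is a subquotient of the product, so the semisimple
module `Π i, R ⧸ m i` of length `n` is a subquotient of `⨁ i, P i`, hence of `M`.
-/

open LinearMap Submodule

section Subquotient

variable {R : Type*} [Ring R] {M N : Type*} [AddCommGroup M] [Module R M]
  [AddCommGroup N] [Module R N]

variable (R M N) in
def IsSubquotient : Prop :=
  ∃ (B : Submodule R M) (f : B →ₗ[R] N), Function.Surjective f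

namespace IsSubquotient

theorem of_injective_of_surjective {C : Type*} [AddCommGroup C] [Module R C] (i : C →ₗ[R] M)
    (hi : Function.Injective i) (s : C →ₗ[R] N) (hs : Function.Surjective s) :
    IsSubquotient R M N :=
  ⟨range i, s ∘ₗ (LinearEquiv.ofInjective i hi).symm.toLinearMap,
    hs.comp (LinearEquiv.surjective _)⟩

theorem of_surjective (f : M →ₗ[R] N) (hf : Function.Surjective f) : IsSubquotient R M N :=
  of_injective_of_surjective LinearMap.id Function.injective_id f hf

theorem trans {Q : Type*} [AddCommGroup Q] [Module R Q] (hMQ : IsSubquotient R M Q)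
    (hQN : IsSubquotient R Q N) : IsSubquotient R M N := by
  obtain ⟨B, f, hf⟩ := hMQ
  obtain ⟨C, g, hg⟩ := hQN
  exact of_injective_of_surjective (B.subtype ∘ₗ (C.comap f).subtype)
    (B.injective_subtype.comp (C.comap f).injective_subtype)
    (g ∘ₗ f.submoduleComap C) (hg.comp (f.submoduleComap_surjective_of_surjective C hf))

theorem pi {ι : Type*} {V W : ι → Type*} [∀ i, AddCommGroup (V i)] [∀ i, Module R (V i)]
    [∀ i, AddCommGroup (W i)] [∀ i, Module R (W i)] (h : ∀ i, IsSubquotient R (V i) (W i)) :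
    IsSubquotient R (Π i, V i) (Π i, W i) := by
  choose B f hf using h
  exact of_injective_of_surjective (piMap fun i => (B i).subtype)
    (Function.Injective.piMap fun i => (B i).injective_subtype) (piMap f)
    (Function.Surjective.piMap hf)

theorem exists_linearEquiv_quotient (h : IsSubquotient R M N) :
    ∃ (A B : Submodule R M) (_ : A ≤ B),
      Nonempty ((B ⧸ comap B.subtype A) ≃ₗ[R] N) := by
  obtain ⟨B, f, hf⟩ := h
  have hker : comap B.subtype ((ker f).map B.subtype) = ker f :=
    comap_map_eq_of_injective B.injective_subtype _
  exact ⟨_, B, map_subtype_le _ _,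
    ⟨(quotEquivOfEq _ _ hker).trans (f.quotKerEquivOfSurjective hf)⟩⟩

theorem exists_iSupIndep_isSimpleModule {ι : Type*} (h : IsSubquotient R M N)
    (Q : ι → Submodule R N) (hQ : ∀ i, IsSimpleModule R (Q i)) (hind : iSupIndep Q)
    (hsup : ⨆ i, Q i = ⊤) :
    ∃ (A B : Submodule R M) (_ : A ≤ B) (P : ι → Submodule R (B ⧸ comap B.subtype A)),
      (∀ i, IsSimpleModule R (P i)) ∧ iSupIndep P ∧ (⨆ i, P i) = ⊤ := by
  obtain ⟨A, B, hAB, ⟨e⟩⟩ := h.exists_linearEquiv_quotient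
  refine ⟨A, B, hAB, fun i => (Q i).map e.symm.toLinearMap, fun i => ?_, ?_, ?_⟩
  · exact IsSimpleModule.congr (e.symm.submoduleMap (Q i)).symm
  · exact (iSupIndep_map_orderIso_iff (orderIsoMapComap e.symm)).2 hind
  · rw [← Submodule.map_iSup, hsup, Submodule.map_top, LinearEquiv.range]

end IsSubquotient

theorem exists_isSimpleModule_isSubquotient [Nontrivial M] :
    ∃ I : Ideal R, IsSimpleModule R (R ⧸ I) ∧ IsSubquotient R M (R ⧸ I) := by
  obtain ⟨v, hv⟩ := exists_ne (0 : M)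
  set f := toSpanSingleton R M v
  have hker : ker f ≠ ⊤ := fun h => hv <| by
    simpa [f] using (h ▸ mem_top : (1 : R) ∈ ker f)
  obtain ⟨I, hI, hle⟩ := Ideal.exists_le_maximal _ hker
  exact ⟨I, isSimpleModule_iff_isCoatom.2 (Ideal.isMaximal_def.1 hI),
    .of_injective_of_surjective ((ker f).liftQ f le_rfl)
      (LinearMap.ker_eq_bot.1 (ker_liftQ_eq_bot' _ f rfl)) (factor hle) (factor_surjective hle)⟩

end Subquotient

theorem LinearMap.iSupIndep_range_single {R ι : Type*} [Semiring R] [DecidableEq ι]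
    (φ : ι → Type*) [∀ i, AddCommMonoid (φ i)] [∀ i, Module R (φ i)] :
    iSupIndep fun i => range (single R φ i) := fun i => by
  simpa using disjoint_single_single R φ {i} {i}ᶜ disjoint_compl_right

/-- If `M` is an `R`-module with `c-rk(M) ≥ n`, i.e. `M` has a subquotient which
is an (internal) direct sum of `n` nonzero submodules, then `M` has a subquotient
which is a semisimple module of length `n`, i.e. an internal direct sum of `n`
simple submodules. -/
theorem stmt_14 (R : Type*) [CommRing R] (M : Type*) [AddCommGroup M] [Module R M]
    (n : ℕ)
    (h : ∃ (A B : Submodule R M) (_ : A ≤ B)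
        (P : Fin n → Submodule R (B ⧸ Submodule.comap B.subtype A)),
      (∀ i, P i ≠ ⊥) ∧ iSupIndep P ∧ (⨆ i, P i) = ⊤) :
    ∃ (A B : Submodule R M) (_ : A ≤ B)
        (P : Fin n → Submodule R (B ⧸ Submodule.comap B.subtype A)),
      (∀ i, IsSimpleModule R (P i)) ∧ iSupIndep P ∧ (⨆ i, P i) = ⊤ := by
  obtain ⟨A, B, -, P, hne, hind, hsup⟩ := h
  have : ∀ i, Nontrivial (P i) := fun i => nontrivial_iff_ne_bot.2 (hne i)
  choose I hI hPI using fun i => exists_isSimpleModule_isSubquotient (R := R) (M := P i)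
  have hQ : IsSubquotient R M (B ⧸ comap B.subtype A) := ⟨B, _, mkQ_surjective _⟩
  have hP : IsSubquotient R (B ⧸ comap B.subtype A) (Π i, P i) :=
    .of_surjective _ ((DirectSum.linearEquivFunOnFintype R _ _).symm.trans <|
      LinearEquiv.ofBijective (DirectSum.coeLinearMap P) (DirectSum.isInternal_submodule_of_iSupIndep_of_iSup_eq_top hind hsup)).symm.surjective
  exact (hQ.trans (hP.trans (.pi hPI))).exists_iSupIndep_isSimpleModule
    (fun i => range (single R _ i))
    (fun i => .congr (LinearEquiv.ofInjective _ (Pi.single_injective (M := fun i => R ⧸ I i) i)).symm)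
    (iSupIndep_range_single _) (iSup_range_single R _)
end
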